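/- arXiv:0706.1677 — 2 statements merged into one kernel-verified Lean document; each statement's English description precedes it below -/
import Mathlib

section
/- Let ω ⊂ ℝ^d be an (r,R)-Delone set of finite local complexity. For any ε > 0 and D > 0, set ρ(D) = D + R + ε + 1/ε. Then N(D,ε) ≤ M(ε) · card(p_ω(ρ(D))), where M(ε) is the minimal number of balls of radius ε/2 needed to cover the closed ball B_R ⊂ ℝ^d and N(D,ε) is the maximal cardinality of a (D,ε)-separated subset of the hull Ω(ω). -/
open MeasureTheory Filter

noncomputable section

/-- The translate `-x + ξ = {-x + y : y ∈ ξ}`. -/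
def transl {d : ℕ} (x : EuclideanSpace ℝ (Fin d)) (ξ : Set (EuclideanSpace ℝ (Fin d))) :
    Set (EuclideanSpace ℝ (Fin d)) := (fun y => y - x) '' ξ

/-- `ξ` is uniformly discrete with packing radius `r`. -/
def UnifDiscrete {d : ℕ} (r : ℝ) (ξ : Set (EuclideanSpace ℝ (Fin d))) : Prop :=
  ∀ x : EuclideanSpace ℝ (Fin d), (ξ ∩ Metric.ball x r).Subsingleton

/-- `ξ` is relatively dense with covering radius `R`. -/
def RelDense {d : ℕ} (R : ℝ) (ξ : Set (EuclideanSpace ℝ (Fin d))) : Prop :=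
  ∀ x : EuclideanSpace ℝ (Fin d), (ξ ∩ Metric.closedBall x R).Nonempty

/-- The set of `D`-patches of `ω`. -/
def patches {d : ℕ} (ω : Set (EuclideanSpace ℝ (Fin d))) (D : ℝ) :
    Set (Set (EuclideanSpace ℝ (Fin d))) :=
  {P | ∃ x ∈ ω, P = transl x ω ∩ Metric.closedBall 0 D}

/-- Finite local complexity. -/
def FLC {d : ℕ} (ω : Set (EuclideanSpace ℝ (Fin d))) : Prop :=
  ∀ D : ℝ, 0 < D → (patches ω D).Finite

/-- The patch counting entropy of `ω`. -/
def hpc {d : ℕ} (ω : Set (EuclideanSpace ℝ (Fin d))) : ℝ :=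
  Filter.limsup (fun n : ℕ =>
    Real.log ((patches ω (n : ℝ)).ncard) /
      (volume (Metric.closedBall (0 : EuclideanSpace ℝ (Fin d)) (n : ℝ))).toReal) atTop

/-- `F` is a repetitivity function for `ω`. -/
def RepetitivityFn {d : ℕ} (ω : Set (EuclideanSpace ℝ (Fin d))) (F : ℝ → ℝ) : Prop :=
  ∀ D : ℝ, 1 ≤ D → ∀ x ∈ ω, ∀ P ∈ patches ω D,
    ∃ y ∈ ω ∩ Metric.closedBall x (F D), P = transl y ω ∩ Metric.closedBall 0 D

/-- The Delone metric on uniformly discrete subsets of `ℝ^d`. -/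
def deloneDist {d : ℕ} (ξ₁ ξ₂ : Set (EuclideanSpace ℝ (Fin d))) : ℝ :=
  min (1 / Real.sqrt 2)
    (sInf {S : ℝ | 0 < S ∧ ∃ u ∈ Metric.closedBall (0 : EuclideanSpace ℝ (Fin d)) S,
      ∃ v ∈ Metric.closedBall (0 : EuclideanSpace ℝ (Fin d)) S,
        transl u ξ₁ ∩ Metric.closedBall 0 (1 / S) =
          transl v ξ₂ ∩ Metric.closedBall 0 (1 / S)})

/-- An `(r,R)`-Delone set. -/
def IsDelone {d : ℕ} (r R : ℝ) (ω : Set (EuclideanSpace ℝ (Fin d))) : Prop :=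
  UnifDiscrete r ω ∧ RelDense R ω

/-- The hull of `ω`: the closure of the translation orbit of `ω` in the space of
`(r,R)`-Delone sets equipped with the Delone metric. -/
def hull {d : ℕ} (r R : ℝ) (ω : Set (EuclideanSpace ℝ (Fin d))) :
    Set (Set (EuclideanSpace ℝ (Fin d))) :=
  {ω' | IsDelone r R ω' ∧ ∀ ε : ℝ, 0 < ε →
    ∃ x : EuclideanSpace ℝ (Fin d), deloneDist (transl x ω) ω' < ε}

/-- `Ξ` is a `(D,ε)`-separated set in the hull (w.r.t. the Delone metric and the
translation action). -/
def IsSepHull {d : ℕ} (D ε : ℝ) (Ξ : Set (Set (EuclideanSpace ℝ (Fin d)))) : Prop :=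
  ∀ ξ₁ ∈ Ξ, ∀ ξ₂ ∈ Ξ, ξ₁ ≠ ξ₂ →
    ∃ x ∈ Metric.closedBall (0 : EuclideanSpace ℝ (Fin d)) D,
      ε < deloneDist (transl x ξ₁) (transl x ξ₂)

/-- `N(D,ε)`: the maximal cardinality of a `(D,ε)`-separated subset of the hull. -/
def sepNumHull {d : ℕ} (r R : ℝ) (ω : Set (EuclideanSpace ℝ (Fin d))) (D ε : ℝ) : ℕ :=
  sSup {k : ℕ | ∃ Ξ : Finset (Set (EuclideanSpace ℝ (Fin d))),
    (Ξ : Set (Set (EuclideanSpace ℝ (Fin d)))) ⊆ hull r R ω ∧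
    IsSepHull D ε (Ξ : Set (Set (EuclideanSpace ℝ (Fin d)))) ∧ Ξ.card = k}

/-- `H_ε(Ω(ω), α) = limsup_n (1/|B_n|) log N(n,ε)`. -/
def HepsHull {d : ℕ} (r R : ℝ) (ω : Set (EuclideanSpace ℝ (Fin d))) (ε : ℝ) : ℝ :=
  Filter.limsup (fun n : ℕ =>
    Real.log (sepNumHull r R ω (n : ℝ) ε) /
      (volume (Metric.closedBall (0 : EuclideanSpace ℝ (Fin d)) (n : ℝ))).toReal) atTop

/-- Topological entropy of the hull dynamical system, as the supremum (= limit as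
`ε → 0`, by antitonicity) of the `H_ε`. -/
def htopHull {d : ℕ} (r R : ℝ) (ω : Set (EuclideanSpace ℝ (Fin d))) : ℝ :=
  ⨆ ε : {ε : ℝ // 0 < ε}, HepsHull r R ω ε

/-- `M(ε)`: the minimal number of closed balls of radius `ε/2` needed to cover the
closed ball of radius `R` in `ℝ^d`. -/
def coverNum (d : ℕ) (R ε : ℝ) : ℕ :=
  sInf {k : ℕ | ∃ s : Finset (EuclideanSpace ℝ (Fin d)), s.card = k ∧
    Metric.closedBall (0 : EuclideanSpace ℝ (Fin d)) R ⊆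
      ⋃ x ∈ s, Metric.closedBall x (ε / 2)}

/-! Every `ξ` in the hull agrees on a large ball with a translate of `ω`, so around some
`t ∈ ξ` with `‖t‖ ≤ R` its `ρ`-patch is a `ρ`-patch of `ω`. Code `ξ` by this patch and by a
centre `c` of an `ε/2`-cover of `B_R` with `dist t c ≤ ε/2`. Two elements with the same code
have `ε`-close points `t₁, t₂` and equal `ρ`-patches there; as `ρ ≥ D + R + 1/ε`, their
translates by any `x ∈ B_D` then agree on `B_{1/ε}` up to the shift `t₁ - t₂`, i.e. are
`ε`-close in the Delone metric. So the code is injective on a `(D,ε)`-separated set. -/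

open Metric

variable {d : ℕ}

@[simp]
lemma mem_transl {x a : EuclideanSpace ℝ (Fin d)} {ξ : Set (EuclideanSpace ℝ (Fin d))} :
    a ∈ transl x ξ ↔ a + x ∈ ξ := by
  simp [transl, sub_eq_iff_eq_add]

lemma transl_transl (u x : EuclideanSpace ℝ (Fin d)) (ξ : Set (EuclideanSpace ℝ (Fin d))) :
    transl u (transl x ξ) = transl (x + u) ξ := by
  ext a
  rw [mem_transl, mem_transl, mem_transl, add_assoc, add_comm u x]

lemma transl_inter_closedBall_eq {A B : Set (EuclideanSpace ℝ (Fin d))} {ρ ρ' : ℝ}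
    {w : EuclideanSpace ℝ (Fin d)} (h : A ∩ closedBall 0 ρ' = B ∩ closedBall 0 ρ')
    (hw : ‖w‖ + ρ ≤ ρ') :
    transl w A ∩ closedBall 0 ρ = transl w B ∩ closedBall 0 ρ := by
  ext a
  simp only [Set.mem_inter_iff, mem_transl, mem_closedBall_zero_iff]
  refine and_congr_left fun ha => ?_
  have haw : ‖a + w‖ ≤ ρ' := (norm_add_le a w).trans (by linarith)
  simpa [haw] using Set.ext_iff.mp h (a + w)

lemma RelDense.nonneg {R : ℝ} {ξ : Set (EuclideanSpace ℝ (Fin d))} (h : RelDense R ξ) :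
    0 ≤ R := by
  obtain ⟨p, -, hp⟩ := h 0
  exact dist_nonneg.trans (mem_closedBall.mp hp)

lemma unifDiscrete_transl {r : ℝ} {ξ : Set (EuclideanSpace ℝ (Fin d))} (h : UnifDiscrete r ξ)
    (x : EuclideanSpace ℝ (Fin d)) : UnifDiscrete r (transl x ξ) := by
  intro c
  have : transl x ξ ∩ ball c r = transl x (ξ ∩ ball (c + x) r) := by
    ext a
    simp [dist_add_right]
  rw [this]
  exact (h (c + x)).image _

lemma relDense_transl {R : ℝ} {ξ : Set (EuclideanSpace ℝ (Fin d))} (h : RelDense R ξ)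
    (x : EuclideanSpace ℝ (Fin d)) : RelDense R (transl x ξ) := by
  intro c
  obtain ⟨p, hp, hpc⟩ := h (c + x)
  refine ⟨p - x, by simpa using hp, ?_⟩
  rwa [mem_closedBall, dist_comm, dist_sub_eq_dist_add_right, dist_comm]

lemma isDelone_transl {r R : ℝ} {ξ : Set (EuclideanSpace ℝ (Fin d))} (h : IsDelone r R ξ)
    (x : EuclideanSpace ℝ (Fin d)) : IsDelone r R (transl x ξ) :=
  ⟨unifDiscrete_transl h.1 x, relDense_transl h.2 x⟩

lemma UnifDiscrete.le_dist_add {r : ℝ} {ξ : Set (EuclideanSpace ℝ (Fin d))}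
    (h : UnifDiscrete r ξ) (hr : 0 < r) {p e : EuclideanSpace ℝ (Fin d)} (hp : p ∈ ξ)
    (he : ‖e‖ = r / 2) {q : EuclideanSpace ℝ (Fin d)} (hq : q ∈ ξ) : r / 2 ≤ dist q (p + e) := by
  have hpe : dist (p + e) p = r / 2 := by rw [dist_eq_norm, add_sub_cancel_left, he]
  by_cases hqp : q = p
  · rw [hqp, dist_comm, hpe]
  · have hrq : r ≤ dist q p := not_lt.mp fun hlt =>
      hqp (h p ⟨hq, mem_ball.mpr hlt⟩ ⟨hp, mem_ball_self hr⟩)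
    linarith [dist_triangle q (p + e) p]

def matchRadii (ξ₁ ξ₂ : Set (EuclideanSpace ℝ (Fin d))) : Set ℝ :=
  {S : ℝ | 0 < S ∧ ∃ u ∈ closedBall (0 : EuclideanSpace ℝ (Fin d)) S,
    ∃ v ∈ closedBall (0 : EuclideanSpace ℝ (Fin d)) S,
      transl u ξ₁ ∩ closedBall 0 (1 / S) = transl v ξ₂ ∩ closedBall 0 (1 / S)}

lemma deloneDist_eq_min (ξ₁ ξ₂ : Set (EuclideanSpace ℝ (Fin d))) :
    deloneDist ξ₁ ξ₂ = min (1 / Real.sqrt 2) (sInf (matchRadii ξ₁ ξ₂)) :=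
  rfl

lemma deloneDist_le_of_mem_matchRadii {ξ₁ ξ₂ : Set (EuclideanSpace ℝ (Fin d))} {S : ℝ}
    (hS : S ∈ matchRadii ξ₁ ξ₂) : deloneDist ξ₁ ξ₂ ≤ S :=
  (min_le_right _ _).trans (csInf_le ⟨0, fun _ h => h.1.le⟩ hS)

/-- Without this, `sInf ∅ = 0` would make `deloneDist ξ₁ ξ₂` vanish and carry no information.
Both sets can be shifted to miss a small ball around the origin. -/
lemma IsDelone.matchRadii_nonempty {r R : ℝ} (hr : 0 < r)
    {ξ₁ ξ₂ : Set (EuclideanSpace ℝ (Fin d))}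
    (h₁ : IsDelone r R ξ₁) (h₂ : IsDelone r R ξ₂) : (matchRadii ξ₁ ξ₂).Nonempty := by
  rcases subsingleton_or_nontrivial (EuclideanSpace ℝ (Fin d)) with hE | hE
  · refine ⟨1, one_pos, 0, by simp, 0, by simp, ?_⟩
    obtain ⟨p₁, hp₁, -⟩ := h₁.2 0
    obtain ⟨p₂, hp₂, -⟩ := h₂.2 0
    rw [Set.Nonempty.eq_univ ⟨p₁, hp₁⟩, Set.Nonempty.eq_univ ⟨p₂, hp₂⟩]
  obtain ⟨e, he⟩ := exists_norm_eq (EuclideanSpace ℝ (Fin d)) (by positivity : 0 ≤ r / 2)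
  have hR := h₁.2.nonneg
  obtain ⟨S, hRS, hrS⟩ : ∃ S, R + r / 2 ≤ S ∧ 2 / r < S :=
    ⟨R + r / 2 + 2 / r, by linarith [div_pos two_pos hr], by linarith⟩
  have hS : 0 < S := by linarith
  have hSr : 1 / S < r / 2 := by rwa [one_div_lt hS (by positivity), one_div_div]
  have hole : ∀ ξ, IsDelone r R ξ → ∃ u ∈ closedBall (0 : EuclideanSpace ℝ (Fin d)) S,
      transl u ξ ∩ closedBall 0 (1 / S) = ∅ := by
    intro ξ hξ
    obtain ⟨p, hp, hpR⟩ := hξ.2 0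
    refine ⟨p + e, ?_, ?_⟩
    · rw [mem_closedBall_zero_iff] at hpR ⊢
      linarith [norm_add_le p e]
    · refine Set.eq_empty_of_forall_notMem fun a ⟨ha, haS⟩ => ?_
      have := hξ.1.le_dist_add hr hp he (mem_transl.mp ha)
      rw [dist_eq_norm, add_sub_cancel_right] at this
      linarith [mem_closedBall_zero_iff.mp haS]
  obtain ⟨u, hu, hu₁⟩ := hole ξ₁ h₁
  obtain ⟨v, hv, hv₂⟩ := hole ξ₂ h₂
  exact ⟨S, hS, u, hu, v, hv, hu₁.trans hv₂.symm⟩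

lemma exists_mem_matchRadii_lt {ξ₁ ξ₂ : Set (EuclideanSpace ℝ (Fin d))} {δ : ℝ}
    (hne : (matchRadii ξ₁ ξ₂).Nonempty) (hδ : δ ≤ 1 / Real.sqrt 2) (h : deloneDist ξ₁ ξ₂ < δ) :
    ∃ S ∈ matchRadii ξ₁ ξ₂, S < δ := by
  rw [deloneDist_eq_min, min_lt_iff] at h
  exact h.elim (fun h => absurd hδ h.not_ge) (exists_lt_of_csInf_lt hne)

lemma exists_mem_patches_of_mem_hull {r R ρ : ℝ} (hr : 0 < r) (hρ : 0 ≤ ρ)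
    {ω ξ : Set (EuclideanSpace ℝ (Fin d))} (hω : IsDelone r R ω) (hξ : ξ ∈ hull r R ω) :
    ∃ t ∈ ξ, ‖t‖ ≤ R ∧ transl t ξ ∩ closedBall 0 ρ ∈ patches ω ρ := by
  obtain ⟨t, ht, htR⟩ := hξ.1.2 0
  rw [mem_closedBall_zero_iff] at htR
  have hR : 0 ≤ R := (norm_nonneg t).trans htR
  obtain ⟨x, hx⟩ := hξ.2 (min (1 / Real.sqrt 2) (1 / (ρ + R + 1))) (by positivity)
  obtain ⟨S, ⟨hS, u, hu, v, hv, huv⟩, hSδ⟩ := exists_mem_matchRadii_lt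
    ((isDelone_transl hω x).matchRadii_nonempty hr hξ.1) (min_le_left _ _) hx
  rw [mem_closedBall_zero_iff] at hu hv
  have hS' : S < 1 / (ρ + R + 1) := hSδ.trans_le (min_le_right _ _)
  have hSρ : ρ + R + 1 < 1 / S := (lt_one_div hS (by positivity)).mp hS'
  have hS1 : S ≤ 1 := hS'.le.trans (div_le_one_of_le₀ (by linarith) (by positivity))
  have hpatch := transl_inter_closedBall_eq (ρ := ρ) (w := t - v) huv
    (by linarith [norm_sub_le t v])
  rw [transl_transl, transl_transl, transl_transl, add_sub_cancel] at hpatch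
  refine ⟨t, ht, htR, _, ?_, hpatch.symm⟩
  have h0 : (0 : EuclideanSpace ℝ (Fin d)) ∈ transl t ξ ∩ closedBall 0 ρ := by simp [ht, hρ]
  rw [← hpatch] at h0
  simpa using h0.1

lemma deloneDist_transl_le_of_patch_eq {R ε D ρ : ℝ} {ξ₁ ξ₂ : Set (EuclideanSpace ℝ (Fin d))}
    {t₁ t₂ x : EuclideanSpace ℝ (Fin d)} (hε : 0 < ε) (ht₂ : ‖t₂‖ ≤ R) (ht : dist t₁ t₂ ≤ ε)
    (hx : ‖x‖ ≤ D) (hρ : D + R + 1 / ε ≤ ρ)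
    (hP : transl t₁ ξ₁ ∩ closedBall 0 ρ = transl t₂ ξ₂ ∩ closedBall 0 ρ) :
    deloneDist (transl x ξ₁) (transl x ξ₂) ≤ ε := by
  refine deloneDist_le_of_mem_matchRadii ⟨hε, t₁ - t₂, by rwa [mem_closedBall_zero_iff,
    ← dist_eq_norm], 0, by simpa using hε.le, ?_⟩
  have := transl_inter_closedBall_eq (ρ := 1 / ε) (w := x - t₂) hP
    (by linarith [norm_sub_le x t₂])
  rw [transl_transl, transl_transl] at this ⊢
  rwa [show x + (t₁ - t₂) = t₁ + (x - t₂) by abel, show x + 0 = t₂ + (x - t₂) by abel]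

lemma exists_finset_card_eq_coverNum (d : ℕ) (R : ℝ) {ε : ℝ} (hε : 0 < ε) :
    ∃ s : Finset (EuclideanSpace ℝ (Fin d)), s.card = coverNum d R ε ∧
      closedBall 0 R ⊆ ⋃ x ∈ s, closedBall x (ε / 2) := by
  obtain ⟨s, -, hs⟩ := (isCompact_closedBall (0 : EuclideanSpace ℝ (Fin d)) R).elim_nhds_subcover
    (fun x => closedBall x (ε / 2)) fun x _ => closedBall_mem_nhds x (by positivity)
  exact Nat.sInf_mem (s := {k | ∃ s : Finset (EuclideanSpace ℝ (Fin d)), s.card = k ∧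
    closedBall 0 R ⊆ ⋃ x ∈ s, closedBall x (ε / 2)}) ⟨s.card, s, rfl, hs⟩

lemma sepNumHull_le {r R D ε : ℝ} {ω : Set (EuclideanSpace ℝ (Fin d))} {n : ℕ}
    (h : ∀ Ξ : Finset (Set (EuclideanSpace ℝ (Fin d))),
      (Ξ : Set (Set (EuclideanSpace ℝ (Fin d)))) ⊆ hull r R ω →
        IsSepHull D ε (Ξ : Set (Set (EuclideanSpace ℝ (Fin d)))) → Ξ.card ≤ n) :
    sepNumHull r R ω D ε ≤ n :=
  csSup_le ⟨0, ∅, by simp, by simp [IsSepHull], rfl⟩ fun _ ⟨Ξ, hΞ, hsep, hk⟩ => hk ▸ h Ξ hΞ hsep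

lemma IsSepHull.card_le_mul_ncard_patches {r R D ε ρ : ℝ} {ω : Set (EuclideanSpace ℝ (Fin d))}
    {Ξ : Finset (Set (EuclideanSpace ℝ (Fin d)))} {s : Finset (EuclideanSpace ℝ (Fin d))}
    (hsep : IsSepHull D ε (Ξ : Set (Set (EuclideanSpace ℝ (Fin d)))))
    (hΞ : (Ξ : Set (Set (EuclideanSpace ℝ (Fin d)))) ⊆ hull r R ω)
    (hr : 0 < r) (hω : IsDelone r R ω) (hε : 0 < ε) (hρ₀ : 0 ≤ ρ) (hρ : D + R + 1 / ε ≤ ρ)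
    (hfin : (patches ω ρ).Finite) (hs : closedBall 0 R ⊆ ⋃ c ∈ s, closedBall c (ε / 2)) :
    Ξ.card ≤ s.card * (patches ω ρ).ncard := by
  have code : ∀ ξ ∈ hull r R ω, ∃ c ∈ s, ∃ t, dist t c ≤ ε / 2 ∧ ‖t‖ ≤ R ∧
      transl t ξ ∩ closedBall 0 ρ ∈ patches ω ρ := by
    intro ξ hξ
    obtain ⟨t, -, htR, hP⟩ := exists_mem_patches_of_mem_hull hr hρ₀ hω hξ
    obtain ⟨c, hc, htc⟩ := Set.mem_iUnion₂.mp (hs (mem_closedBall_zero_iff.mpr htR))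
    exact ⟨c, hc, t, htc, htR, hP⟩
  choose! c hc t htc htR hP using code
  calc Ξ.card ≤ (s ×ˢ hfin.toFinset).card := by
        refine Finset.card_le_card_of_injOn (fun ξ => (c ξ, transl (t ξ) ξ ∩ closedBall 0 ρ))
          (fun ξ hξ => Finset.mem_product.mpr
            ⟨hc ξ (hΞ hξ), hfin.mem_toFinset.mpr (hP ξ (hΞ hξ))⟩)
          fun ξ₁ h₁ ξ₂ h₂ hcode => ?_
        obtain ⟨hc₁₂, hP₁₂⟩ := Prod.mk.inj hcode
        by_contra hne
        obtain ⟨x, hx, hfar⟩ := hsep ξ₁ h₁ ξ₂ h₂ hne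
        have ht : dist (t ξ₁) (t ξ₂) ≤ ε := by
          have h₂c := htc ξ₂ (hΞ h₂)
          rw [← hc₁₂] at h₂c
          linarith [dist_triangle_right (t ξ₁) (t ξ₂) (c ξ₁), htc ξ₁ (hΞ h₁)]
        exact hfar.not_ge (deloneDist_transl_le_of_patch_eq hε (htR ξ₂ (hΞ h₂)) ht
          (mem_closedBall_zero_iff.mp hx) hρ hP₁₂)
    _ = s.card * (patches ω ρ).ncard := by
        rw [Finset.card_product, Set.ncard_eq_toFinset_card _ hfin]

theorem sepNum_le_coverNum_mul_patches_general {d : ℕ} (r R : ℝ) (hr : 0 < r)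
    (ω : Set (EuclideanSpace ℝ (Fin d))) (hω : IsDelone r R ω) (hflc : FLC ω)
    (ε D : ℝ) (hε : 0 < ε) (hD : 0 < D) :
    (sepNumHull r R ω D ε : ℝ) ≤
      (coverNum d R ε : ℝ) * ((patches ω (D + R + ε + 1 / ε)).ncard : ℝ) := by
  have hρ : 0 < D + R + ε + 1 / ε := by have := hω.2.nonneg; positivity
  obtain ⟨s, hs_card, hs⟩ := exists_finset_card_eq_coverNum d R hε
  rw [← hs_card]
  exact_mod_cast sepNumHull_le fun Ξ hΞ hsep => hsep.card_le_mul_ncard_patches hΞ hr hω hε hρ.le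
    (by linarith) (hflc _ hρ) hs

theorem sepNum_le_coverNum_mul_patches {d : ℕ} (r R : ℝ) (hr : 0 < r) (hrR : r ≤ R)
    (ω : Set (EuclideanSpace ℝ (Fin d))) (hω : IsDelone r R ω) (hflc : FLC ω)
    (ε D : ℝ) (hε : 0 < ε) (hD : 0 < D) :
    (sepNumHull r R ω D ε : ℝ) ≤
      (coverNum d R ε : ℝ) * ((patches ω (D + R + ε + 1 / ε)).ncard : ℝ) :=
  sepNum_le_coverNum_mul_patches_general r R hr ω hω hflc ε D hε hD
end
end

section
/- Let a_n = 1 + e + e² + ⋯ + e^{n−1} and Λ = {±a_n : n ∈ ℕ} ⊂ ℝ. Then the patch counting function of Λ grows at most logarithmically: there is a constant C such that card(p_Λ(D)) ≤ C·log(D) + C for all D ≥ 2, and consequently the patch counting entropy h_pc(Λ) = limsup_{n→∞} (1/(2n)) log card(p_Λ(n)) equals 0. -/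
/-!
Points of `Λ` far from the origin are isolated: the gap between `±a_n` and any other point of `Λ`
is at least `e^(n-1)`. Hence once `e^(n-1) > D` the `D`-patch around `±a_n` is just `{0}`, and the
only other patches are those around the `2(⌊log D⌋ + 1)` points `±a_n` with `e^(n-1) ≤ D`. So the
patch count is `O(log D)`, and `log (card p_Λ(n)) / (2n) → 0`.
-/

open Filter

noncomputable section

/-- `a n = 1 + e + e² + ⋯ + e^{n-1}`. -/
def geomE (n : ℕ) : ℝ := ∑ i ∈ Finset.range n, Real.exp 1 ^ i

/-- `Λ = {± a n : n ≥ 1}`. -/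
def Lam : Set ℝ := {x | ∃ n : ℕ, 1 ≤ n ∧ (x = geomE n ∨ x = -geomE n)}

/-- The set of `D`-patches of `Λ`: `(−x + Λ) ∩ [−D, D]` for `x ∈ Λ`. -/
def patchesLam (D : ℝ) : Set (Set ℝ) :=
  {P | ∃ x ∈ Lam, P = ((fun y => y - x) '' Lam) ∩ Set.Icc (-D) D}

open Topology Real

def patchAt (D x : ℝ) : Set ℝ := ((fun y => y - x) '' Lam) ∩ Set.Icc (-D) D

lemma patchesLam_eq_image (D : ℝ) : patchesLam D = patchAt D '' Lam := by
  ext P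
  exact exists_congr fun x => and_congr_right' eq_comm

lemma geomE_nonneg (n : ℕ) : 0 ≤ geomE n :=
  Finset.sum_nonneg fun _ _ => by positivity

lemma exp_one_pow_le_geomE_sub {m n : ℕ} (h : m < n) :
    exp 1 ^ (n - 1) ≤ geomE n - geomE m := by
  rw [geomE, geomE, ← Finset.sum_Ico_eq_sub _ h.le]
  exact Finset.single_le_sum (fun i _ => by positivity) (Finset.mem_Ico.mpr ⟨by omega, by omega⟩)

lemma exp_one_pow_le_geomE {n : ℕ} (hn : 1 ≤ n) : exp 1 ^ (n - 1) ≤ geomE n := by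
  simpa [geomE] using exp_one_pow_le_geomE_sub hn

lemma exp_one_pow_le_abs_geomE_sub {m n : ℕ} (hmn : m ≠ n) :
    exp 1 ^ (n - 1) ≤ |geomE m - geomE n| := by
  rcases hmn.lt_or_gt with h | h
  · rw [abs_sub_comm]
    exact (exp_one_pow_le_geomE_sub h).trans (le_abs_self _)
  · calc exp 1 ^ (n - 1) ≤ exp 1 ^ (m - 1) := pow_le_pow_right₀ (one_le_exp zero_le_one) (by omega)
      _ ≤ |geomE m - geomE n| := (exp_one_pow_le_geomE_sub h).trans (le_abs_self _)

lemma exp_one_pow_le_abs_sub_of_mem_Lam {n : ℕ} (hn : 1 ≤ n) {x y : ℝ}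
    (hx : x = geomE n ∨ x = -geomE n) (hy : y ∈ Lam) (hxy : y ≠ x) :
    exp 1 ^ (n - 1) ≤ |y - x| := by
  obtain ⟨m, -, hy⟩ := hy
  have hm0 := geomE_nonneg m
  have hn0 := geomE_nonneg n
  have hgap := exp_one_pow_le_geomE hn
  rcases hx with rfl | rfl <;> rcases hy with rfl | rfl
  · exact exp_one_pow_le_abs_geomE_sub (by rintro rfl; exact hxy rfl)
  · rw [abs_of_nonpos (by linarith)]; linarith
  · rw [abs_of_nonneg (by linarith)]; linarith
  · rw [show -geomE m - -geomE n = -(geomE m - geomE n) by ring, abs_neg]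
    exact exp_one_pow_le_abs_geomE_sub (by rintro rfl; exact hxy rfl)

lemma patchAt_eq_singleton_zero {D : ℝ} (hD : 0 ≤ D) {n : ℕ} (hn : 1 ≤ n)
    (hDn : D < exp 1 ^ (n - 1)) {x : ℝ} (hx : x = geomE n ∨ x = -geomE n) :
    patchAt D x = {0} := by
  ext z
  simp only [patchAt, Set.mem_inter_iff, Set.mem_image, Set.mem_Icc, Set.mem_singleton_iff]
  constructor
  · rintro ⟨⟨y, hy, rfl⟩, hz⟩
    by_contra hne
    have hfar := exp_one_pow_le_abs_sub_of_mem_Lam hn hx hy (sub_ne_zero.mp hne)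
    linarith [abs_le.mpr hz]
  · rintro rfl
    exact ⟨⟨x, ⟨n, hn, hx⟩, sub_self x⟩, by linarith, hD⟩

def lamUpTo (N : ℕ) : Finset ℝ :=
  (Finset.Icc 1 N).image geomE ∪ (Finset.Icc 1 N).image (fun n => -geomE n)

lemma card_lamUpTo_le (N : ℕ) : (lamUpTo N).card ≤ 2 * N := by
  calc (lamUpTo N).card ≤ (Finset.Icc 1 N).card + (Finset.Icc 1 N).card :=
        (Finset.card_union_le _ _).trans (add_le_add Finset.card_image_le Finset.card_image_le)
    _ = 2 * N := by simp; ring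

lemma patchesLam_subset {D : ℝ} (hD : 0 ≤ D) {N : ℕ} (hDN : D < exp 1 ^ N) :
    patchesLam D ⊆ ↑(insert {0} ((lamUpTo N).image (patchAt D))) := by
  rw [patchesLam_eq_image]
  rintro _ ⟨x, ⟨n, hn, hx⟩, rfl⟩
  simp only [Finset.coe_insert, Finset.coe_image, Set.mem_insert_iff, Set.mem_image,
    Finset.mem_coe]
  by_cases hnN : n ≤ N
  · refine Or.inr ⟨x, ?_, rfl⟩
    have hmem : n ∈ Finset.Icc 1 N := Finset.mem_Icc.mpr ⟨hn, hnN⟩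
    rcases hx with rfl | rfl
    · exact Finset.mem_union_left _ (Finset.mem_image_of_mem _ hmem)
    · exact Finset.mem_union_right _ (Finset.mem_image_of_mem _ hmem)
  · refine Or.inl (patchAt_eq_singleton_zero hD hn (hDN.trans_le ?_) hx)
    exact pow_le_pow_right₀ (one_le_exp zero_le_one) (by omega)

lemma lt_exp_one_pow_floor_log_add_one {D : ℝ} (hD : 0 < D) :
    D < exp 1 ^ (⌊log D⌋₊ + 1) := by
  rw [exp_one_pow]
  calc D = exp (log D) := (exp_log hD).symm
    _ < exp ↑(⌊log D⌋₊ + 1) := exp_lt_exp.mpr (by exact_mod_cast Nat.lt_floor_add_one (log D))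

lemma finite_patchesLam {D : ℝ} (hD : 0 < D) : (patchesLam D).Finite :=
  (Finset.finite_toSet _).subset (patchesLam_subset hD.le (lt_exp_one_pow_floor_log_add_one hD))

lemma one_le_ncard_patchesLam {D : ℝ} (hD : 0 < D) : 1 ≤ (patchesLam D).ncard :=
  (Set.ncard_pos (finite_patchesLam hD)).mpr
    ⟨patchAt D (geomE 1), by rw [patchesLam_eq_image]; exact ⟨_, ⟨1, le_rfl, Or.inl rfl⟩, rfl⟩⟩

lemma ncard_patchesLam_le_log {D : ℝ} (hD : 1 ≤ D) :
    ((patchesLam D).ncard : ℝ) ≤ 2 * log D + 3 := by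
  classical
  set N := ⌊log D⌋₊ + 1
  have hcount : (patchesLam D).ncard ≤ 2 * N + 1 := by
    calc (patchesLam D).ncard
        ≤ (insert {0} ((lamUpTo N).image (patchAt D))).card := by
          rw [← Set.ncard_coe_finset]
          exact Set.ncard_le_ncard (patchesLam_subset (by linarith)
            (lt_exp_one_pow_floor_log_add_one (by linarith))) (Finset.finite_toSet _)
      _ ≤ (lamUpTo N).card + 1 :=
          (Finset.card_insert_le _ _).trans (by gcongr; exact Finset.card_image_le)
      _ ≤ 2 * N + 1 := by gcongr; exact card_lamUpTo_le N
  have hfloor : (⌊log D⌋₊ : ℝ) ≤ log D := Nat.floor_le (log_nonneg hD)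
  calc ((patchesLam D).ncard : ℝ) ≤ 2 * (⌊log D⌋₊ + 1 : ℕ) + 1 := by exact_mod_cast hcount
    _ ≤ 2 * log D + 3 := by push_cast; linarith

lemma tendsto_log_div_natCast_of_le_mul {u : ℕ → ℝ} {C : ℝ} (hC : 0 < C)
    (hlo : ∀ᶠ n in atTop, 1 ≤ u n) (hhi : ∀ᶠ n in atTop, u n ≤ C * n) :
    Tendsto (fun n : ℕ => log (u n) / n) atTop (𝓝 0) := by
  have hlog : Tendsto (fun n : ℕ => log C / n + log n / n) atTop (𝓝 0) := by
    have hconst := tendsto_const_nhds (x := log C).div_atTop tendsto_natCast_atTop_atTop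
    have hlogn := (Real.tendsto_pow_log_div_mul_add_atTop 1 0 1 one_ne_zero).comp
      tendsto_natCast_atTop_atTop
    simpa using hconst.add hlogn
  refine tendsto_of_tendsto_of_tendsto_of_le_of_le' tendsto_const_nhds hlog ?_ ?_
  · filter_upwards [hlo] with n hn
    exact div_nonneg (log_nonneg hn) n.cast_nonneg
  · filter_upwards [hlo, hhi, eventually_gt_atTop 0] with n hn1 hnC hn
    rw [← add_div, ← log_mul hC.ne' (by positivity)]
    gcongr

theorem lam_patch_count_log_and_hpc_zero :
    (∃ C : ℝ, ∀ D : ℝ, 2 ≤ D →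
      ((patchesLam D).ncard : ℝ) ≤ C * Real.log D + C) ∧
    Filter.limsup (fun n : ℕ =>
      Real.log ((patchesLam (n : ℝ)).ncard) / (2 * (n : ℝ))) atTop = 0 := by
  refine ⟨⟨3, fun D hD => ?_⟩, ?_⟩
  · linarith [ncard_patchesLam_le_log (by linarith : 1 ≤ D), log_nonneg (by linarith : 1 ≤ D)]
  · have hgrowth : Tendsto (fun n : ℕ => log ((patchesLam (n : ℝ)).ncard) / n) atTop (𝓝 0) := by
      refine tendsto_log_div_natCast_of_le_mul (C := 3) (by norm_num) ?_ ?_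
      · filter_upwards [eventually_gt_atTop 0] with n hn
        exact_mod_cast one_le_ncard_patchesLam (Nat.cast_pos.mpr hn)
      · filter_upwards [eventually_ge_atTop 1] with n hn
        have hn : (1 : ℝ) ≤ n := by exact_mod_cast hn
        linarith [ncard_patchesLam_le_log hn, log_le_sub_one_of_pos (by linarith : (0 : ℝ) < n)]
    simpa [div_div, mul_comm] using (hgrowth.div_const 2).limsup_eq
end
end
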